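/- Let ρ be a density operator and Λ a measurement operator with 0 ≤ Λ ≤ I on a finite-dimensional Hilbert space. If Tr{Λρ} ≥ 1 − ε for some ε ∈ [0,1], then ‖ρ − √Λ ρ √Λ‖₁ ≤ 2√ε, where ‖·‖₁ denotes the trace norm. -/

import Mathlib

open Matrix BigOperators Kronecker
open scoped Classical ComplexOrder

variable {d : Type*} [Fintype d] [DecidableEq d]

/-- The positive semidefinite square root of a positive semidefinite matrix
(the definition `Matrix.PosSemidef.sqrt` of Mathlib, December 2024, since removed). -/
noncomputable def Matrix.PosSemidef.sqrt {𝕜 : Type*} [RCLike 𝕜] {n : Type*} [Fintype n]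
    [DecidableEq n] {A : Matrix n n 𝕜} (hA : A.PosSemidef) : Matrix n n 𝕜 :=
  hA.1.eigenvectorUnitary.1 * diagonal ((↑) ∘ (√·) ∘ hA.1.eigenvalues) *
  (star hA.1.eigenvectorUnitary : Matrix n n 𝕜)

/-- Trace norm of a matrix. -/
noncomputable def traceNorm (A : Matrix d d ℂ) : ℝ :=
  ((Matrix.posSemidef_conjTranspose_mul_self A).sqrt.trace).re

/-- Spectral functional calculus for a Hermitian matrix. -/
noncomputable def specFun {A : Matrix d d ℂ} (hA : A.IsHermitian) (f : ℝ → ℝ) :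
    Matrix d d ℂ :=
  (hA.eigenvectorUnitary : Matrix d d ℂ) *
    Matrix.diagonal (fun i => (f (hA.eigenvalues i) : ℂ)) *
    star (hA.eigenvectorUnitary : Matrix d d ℂ)

/-- Matrix power via functional calculus, with the convention `0 ^ s = 0` on kernels.
For `s = -1/2` this gives the square root of the Moore–Penrose inverse. -/
noncomputable def mpow (A : Matrix d d ℂ) (s : ℝ) : Matrix d d ℂ :=
  if hA : A.PosSemidef then
    specFun hA.1 (fun t => if t = 0 then 0 else t ^ s)
  else 0

/-- Base-2 matrix logarithm via functional calculus, `log 0 := 0` on kernels. -/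
noncomputable def mlog (A : Matrix d d ℂ) : Matrix d d ℂ :=
  if hA : A.PosSemidef then
    specFun hA.1 (fun t => if t = 0 then 0 else Real.logb 2 t)
  else 0

/-- Positive spectral projection `{X ≥ 0}` of a Hermitian matrix. -/
noncomputable def posProj {A : Matrix d d ℂ} (hA : A.IsHermitian) : Matrix d d ℂ :=
  specFun hA (fun t => if 0 ≤ t then 1 else 0)

/-- A density operator: positive semi-definite with unit trace. -/
def IsDensity (ρ : Matrix d d ℂ) : Prop := ρ.PosSemidef ∧ ρ.trace = 1

/-- A measurement operator: `0 ≤ Λ ≤ I`. -/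
def IsMeasOp (Λ : Matrix d d ℂ) : Prop := Λ.PosSemidef ∧ (1 - Λ).PosSemidef

/-- `n`-fold tensor power of a matrix. -/
def tpow (ρ : Matrix d d ℂ) (n : ℕ) : Matrix (Fin n → d) (Fin n → d) ℂ :=
  Matrix.of fun x y => ∏ i, ρ (x i) (y i)

/-- Partial trace over the right (second) tensor factor. -/
noncomputable def ptraceR {a b : Type*} [Fintype a] [Fintype b]
    (ρ : Matrix (a × b) (a × b) ℂ) : Matrix a a ℂ :=
  Matrix.of fun i j => ∑ k, ρ (i, k) (j, k)

/-- Partial trace over the left (first) tensor factor. -/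
noncomputable def ptraceL {a b : Type*} [Fintype a] [Fintype b]
    (ρ : Matrix (a × b) (a × b) ℂ) : Matrix b b ℂ :=
  Matrix.of fun i j => ∑ k, ρ (k, i) (k, j)

/-- Quantum relative entropy (base 2), via the `mlog` convention. -/
noncomputable def qRelEnt (ρ σ : Matrix d d ℂ) : ℝ :=
  ((ρ * (mlog ρ - mlog σ)).trace).re

/-- ε-hypothesis testing relative entropy. -/
noncomputable def DH (ε : ℝ) (ρ σ : Matrix d d ℂ) : ℝ :=
  -Real.logb 2 (sInf {x : ℝ | ∃ Λ : Matrix d d ℂ,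
    IsMeasOp Λ ∧ 1 - ε ≤ ((Λ * ρ).trace).re ∧ x = ((Λ * σ).trace).re})

/-- Petz–Rényi relative entropy of order α. -/
noncomputable def DAlpha (α : ℝ) (ρ σ : Matrix d d ℂ) : ℝ :=
  (1 / (α - 1)) * Real.logb 2 (((mpow ρ α * mpow σ (1 - α)).trace).re)

/-- Shannon entropy (bits) of a probability vector. -/
noncomputable def shannon (p : d → ℝ) : ℝ := -∑ x, p x * Real.logb 2 (p x)

/-- von Neumann entropy (bits). -/
noncomputable def vnEntropy (A : Matrix d d ℂ) : ℝ :=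
  if hA : A.IsHermitian then -∑ i, hA.eigenvalues i * Real.logb 2 (hA.eigenvalues i) else 0

/-- Collision (order-2) conditional entropy `H₂(C|S)` of a bipartite state on `s ⊗ c`. -/
noncomputable def H2cond {s c : Type*} [Fintype s] [Fintype c] [DecidableEq s] [DecidableEq c]
    (ω : Matrix (s × c) (s × c) ℂ) : ℝ :=
  -Real.logb 2 ((ω * (mpow (ptraceR ω) (-(1/2)) ⊗ₖ (1 : Matrix c c ℂ)) *
      ω * (mpow (ptraceR ω) (-(1/2)) ⊗ₖ (1 : Matrix c c ℂ))).trace).re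

/-!
Write `S = √Λ`, `ρ = R²` and `X = ρ - SρS = (1 - S)ρ + Sρ(1 - S)`. As `X` is Hermitian,
`‖X‖₁ = Re Tr(U X)` for the unitary `U = sign X`. Both terms of `Tr(U X)` are Hilbert–Schmidt
inner products, `Tr(R U · (R(1 - S))ᴴ)` and `Tr(R(1 - S)U · (R S)ᴴ)`, so by Cauchy–Schwarz each is
at most `‖R(1 - S)‖₂`, the other factors being `‖R‖₂ = 1` and `‖R S‖₂² = Tr(ρΛ) ≤ 1`. Finally the
scalar inequality `(1 - √λ)² ≤ 1 - λ` on `[0, 1]` gives `‖R(1 - S)‖₂² ≤ Tr(ρ(1 - Λ)) ≤ ε`.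
-/

open scoped MatrixOrder

namespace CFC

variable {A : Type*} [PartialOrder A] [Ring A] [StarRing A] [TopologicalSpace A]
  [StarOrderedRing A] [Algebra ℝ A] [ContinuousFunctionalCalculus ℝ A IsSelfAdjoint]
  [NonnegSpectrumClass ℝ A] [IsSemitopologicalRing A] [T2Space A]

lemma one_sub_sqrt_sq_le {a : A} (ha₀ : 0 ≤ a) (ha₁ : a ≤ 1) : (1 - sqrt a) ^ 2 ≤ 1 - a := by
  have hle : ∀ t ∈ spectrum ℝ a, t ≤ 1 := (CFC.le_one_iff a).mp ha₁
  rw [sqrt_eq_real_sqrt a, cfcₙ_eq_cfc]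
  calc (1 - cfc Real.sqrt a) ^ 2 = cfc (fun t => (1 - √t) ^ 2) a := by
        rw [cfc_pow _ _ a, cfc_sub _ _ a, cfc_const_one ℝ a]
    _ ≤ cfc (fun t => 1 - t) a := cfc_mono fun t ht => by
        have hsq : √t ^ 2 = t := Real.sq_sqrt (spectrum_nonneg_of_nonneg ha₀ ht)
        nlinarith [Real.sqrt_nonneg t, Real.sqrt_le_one.mpr (hle t ht)]
    _ = 1 - a := by rw [cfc_sub _ _ a, cfc_const_one ℝ a, cfc_id' ℝ a]

end CFC

namespace Matrix

variable {𝕜 : Type*} [RCLike 𝕜] {n : Type*} [Fintype n] [DecidableEq n]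

lemma PosSemidef.sqrt_eq_cfcSqrt {A : Matrix n n 𝕜} (hA : A.PosSemidef) :
    hA.sqrt = CFC.sqrt A := by
  rw [CFC.sqrt_eq_real_sqrt A hA.nonneg, cfcₙ_eq_cfc, hA.1.cfc_eq, IsHermitian.cfc,
    Unitary.conjStarAlgAut_apply]
  rfl

omit [DecidableEq n] in
lemma re_trace_le_re_trace_of_le {A B : Matrix n n 𝕜} (hAB : A ≤ B) :
    RCLike.re A.trace ≤ RCLike.re B.trace := by
  have h := (RCLike.nonneg_iff.mp (le_iff.mp hAB).trace_nonneg).1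
  rwa [trace_sub, map_sub, sub_nonneg] at h

lemma IsHermitian.exists_unitary_mul_eq_abs {X : Matrix n n 𝕜} (hX : X.IsHermitian) :
    ∃ U ∈ unitary (Matrix n n 𝕜), U * X = CFC.abs X := by
  have hcont : ∀ f : ℝ → ℝ, ContinuousOn f (spectrum ℝ X) := fun f =>
    X.finite_real_spectrum.continuousOn f
  set sgn : ℝ → ℝ := fun t => if 0 ≤ t then 1 else -1
  refine ⟨cfc sgn X, ?_, ?_⟩
  · rw [cfc_unitary_iff sgn X hX.isSelfAdjoint (hcont _)]
    intro t _
    by_cases ht : 0 ≤ t <;> simp [sgn, ht]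
  · rw [CFC.abs_eq_cfc_norm X hX.isSelfAdjoint]
    conv_lhs => enter [2]; rw [← cfc_id ℝ X hX.isSelfAdjoint]
    rw [← cfc_mul sgn id X (hcont _) (hcont _)]
    refine cfc_congr fun t _ => ?_
    by_cases ht : 0 ≤ t
    · simp [sgn, ht, abs_of_nonneg ht]
    · simp [sgn, ht, abs_of_neg (not_le.mp ht)]

lemma re_trace_mul_conjTranspose_le (A B : Matrix n n 𝕜) :
    RCLike.re (A * Bᴴ).trace ≤
      √(RCLike.re (A * Aᴴ).trace) * √(RCLike.re (B * Bᴴ).trace) := by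
  let _ := toMatrixSeminormedAddCommGroup (1 : Matrix n n 𝕜) PosSemidef.one
  let _ := toMatrixInnerProductSpace (1 : Matrix n n 𝕜) PosSemidef.one
  have hinner : ∀ x y : Matrix n n 𝕜, inner 𝕜 x y = (y * xᴴ).trace := fun x y => by
    show (y * 1 * xᴴ).trace = _
    rw [mul_one]
  have h := re_inner_le_norm (𝕜 := 𝕜) B A
  rwa [norm_eq_sqrt_re_inner (𝕜 := 𝕜) A, norm_eq_sqrt_re_inner (𝕜 := 𝕜) B, mul_comm,
    hinner, hinner, hinner] at h

lemma re_trace_unitary_mul_sub_conj_le {R S U : Matrix n n 𝕜} (hR : R.IsHermitian)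
    (hS : S.IsHermitian) (hU : U ∈ unitary (Matrix n n 𝕜)) :
    RCLike.re (U * (R * R - S * (R * R) * S)).trace ≤
      (√(RCLike.re (R * R).trace) + √(RCLike.re (R * S ^ 2 * R).trace)) *
        √(RCLike.re (R * (1 - S) ^ 2 * R).trace) := by
  have hS' : (1 - S).IsHermitian := isHermitian_one.sub hS
  have hUU : U * Uᴴ = 1 := Unitary.mul_star_self_of_mem hU
  have hsplit : U * (R * R - S * (R * R) * S) =
      U * (1 - S) * R * R + U * S * R * R * (1 - S) := by
    noncomm_ring
  have h₁ : (U * (1 - S) * R * R).trace = (R * U * (R * (1 - S))ᴴ).trace := by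
    rw [trace_mul_comm, conjTranspose_mul, hR.eq, hS'.eq]
    simp only [mul_assoc]
  have h₂ : (U * S * R * R * (1 - S)).trace = (R * (1 - S) * U * (R * S)ᴴ).trace := by
    rw [show U * S * R * R * (1 - S) = U * S * R * (R * (1 - S)) by simp only [mul_assoc],
      trace_mul_comm, conjTranspose_mul, hR.eq, hS.eq]
    simp only [mul_assoc]
  have n₁ : R * U * (R * U)ᴴ = R * R := by
    rw [conjTranspose_mul, hR.eq, mul_assoc, ← mul_assoc U, hUU, one_mul]
  have n₂ : R * (1 - S) * (R * (1 - S))ᴴ = R * (1 - S) ^ 2 * R := by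
    rw [conjTranspose_mul, hR.eq, hS'.eq, sq]
    simp only [mul_assoc]
  have n₃ : R * (1 - S) * U * (R * (1 - S) * U)ᴴ = R * (1 - S) ^ 2 * R := by
    rw [← n₂, conjTranspose_mul _ U, mul_assoc _ U, ← mul_assoc U, hUU, one_mul]
  have n₄ : R * S * (R * S)ᴴ = R * S ^ 2 * R := by
    rw [conjTranspose_mul, hR.eq, hS.eq, sq]
    simp only [mul_assoc]
  rw [hsplit, trace_add, map_add, h₁, h₂, add_mul]
  gcongr
  · rw [← n₁, ← n₂]
    exact re_trace_mul_conjTranspose_le (R * U) (R * (1 - S))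
  · rw [mul_comm, ← n₃, ← n₄]
    exact re_trace_mul_conjTranspose_le (R * (1 - S) * U) (R * S)

lemma re_trace_unitary_mul_sub_sqrt_conj_le {ρ Λ U : Matrix n n 𝕜} (hρ : 0 ≤ ρ) (hΛ₀ : 0 ≤ Λ)
    (hΛ₁ : Λ ≤ 1) (hU : U ∈ unitary (Matrix n n 𝕜)) :
    RCLike.re (U * (ρ - CFC.sqrt Λ * ρ * CFC.sqrt Λ)).trace ≤
      2 * √(RCLike.re ρ.trace) * √(RCLike.re ρ.trace - RCLike.re (Λ * ρ).trace) := by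
  set R := CFC.sqrt ρ
  set S := CFC.sqrt Λ
  have hR : R.IsHermitian := (CFC.sqrt_nonneg ρ).posSemidef.1
  have hRR : R * R = ρ := CFC.sqrt_mul_sqrt_self ρ hρ
  have hconj : ∀ A, (R * A * R).trace = (A * ρ).trace := fun A => by
    rw [trace_mul_cycle, hRR, trace_mul_comm]
  have hdefect : RCLike.re (R * (1 - S) ^ 2 * R).trace ≤
      RCLike.re ρ.trace - RCLike.re (Λ * ρ).trace :=
    calc RCLike.re (R * (1 - S) ^ 2 * R).trace ≤ RCLike.re (R * (1 - Λ) * R).trace :=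
          re_trace_le_re_trace_of_le <|
            hR.isSelfAdjoint.conjugate_le_conjugate (CFC.one_sub_sqrt_sq_le hΛ₀ hΛ₁)
      _ = _ := by rw [hconj, sub_mul, one_mul, trace_sub, map_sub]
  have hexpect : RCLike.re (R * S ^ 2 * R).trace ≤ RCLike.re (R * R).trace := by
    simpa only [mul_one] using re_trace_le_re_trace_of_le <|
      hR.isSelfAdjoint.conjugate_le_conjugate (show S ^ 2 ≤ 1 by rwa [CFC.sq_sqrt Λ hΛ₀])
  calc RCLike.re (U * (ρ - S * ρ * S)).trace
        = RCLike.re (U * (R * R - S * (R * R) * S)).trace := by rw [hRR]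
    _ ≤ (√(RCLike.re (R * R).trace) + √(RCLike.re (R * S ^ 2 * R).trace)) *
          √(RCLike.re (R * (1 - S) ^ 2 * R).trace) :=
        re_trace_unitary_mul_sub_conj_le hR (CFC.sqrt_nonneg Λ).posSemidef.1 hU
    _ ≤ (√(RCLike.re ρ.trace) + √(RCLike.re ρ.trace)) *
          √(RCLike.re ρ.trace - RCLike.re (Λ * ρ).trace) := by
        rw [hRR] at hexpect ⊢
        gcongr
    _ = _ := by ring

end Matrix

lemma traceNorm_eq_re_trace_abs (A : Matrix d d ℂ) : traceNorm A = (CFC.abs A).trace.re := by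
  rw [traceNorm, Matrix.PosSemidef.sqrt_eq_cfcSqrt, CFC.abs, Matrix.star_eq_conjTranspose]

theorem gentle_operator_general (ρ Λ : Matrix d d ℂ) (hρ : IsDensity ρ)
    (hΛ : Λ.PosSemidef) (hΛI : (1 - Λ).PosSemidef)
    (ε : ℝ)
    (h : 1 - ε ≤ ((Λ * ρ).trace).re) :
    traceNorm (ρ - hΛ.sqrt * ρ * hΛ.sqrt) ≤ 2 * Real.sqrt ε := by
  obtain ⟨hρ₀, hρ₁⟩ := hρ
  set S := CFC.sqrt Λ
  have hX : (ρ - S * ρ * S).IsHermitian :=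
    hρ₀.1.isSelfAdjoint.sub
      (hρ₀.1.isSelfAdjoint.conjugate_self (CFC.sqrt_nonneg Λ).posSemidef.1.isSelfAdjoint)
  obtain ⟨U, hU, hUX⟩ := hX.exists_unitary_mul_eq_abs
  rw [hΛ.sqrt_eq_cfcSqrt, traceNorm_eq_re_trace_abs, ← hUX]
  calc _ ≤ 2 * √(RCLike.re ρ.trace) * √(RCLike.re ρ.trace - RCLike.re (Λ * ρ).trace) :=
        Matrix.re_trace_unitary_mul_sub_sqrt_conj_le hρ₀.nonneg hΛ.nonneg hΛI hU
    _ ≤ 2 * √ε := by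
        rw [hρ₁, RCLike.one_re, Real.sqrt_one, mul_one]
        gcongr
        simp only [RCLike.re_to_complex]
        linarith

/-- **Gentle operator lemma.** If a measurement operator `Λ` detects the density operator `ρ`
with probability at least `1 - ε`, then `‖ρ - √Λ ρ √Λ‖₁ ≤ 2√ε`. -/
theorem gentle_operator (ρ Λ : Matrix d d ℂ) (hρ : IsDensity ρ)
    (hΛ : Λ.PosSemidef) (hΛI : (1 - Λ).PosSemidef)
    (ε : ℝ) (hε : ε ∈ Set.Icc (0 : ℝ) 1)
    (h : 1 - ε ≤ ((Λ * ρ).trace).re) :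
    traceNorm (ρ - hΛ.sqrt * ρ * hΛ.sqrt) ≤ 2 * Real.sqrt ε :=
  gentle_operator_general ρ Λ hρ hΛ hΛI ε h
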